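/- arXiv:0710.5314 — 2 statements merged into one kernel-verified Lean document; each statement's English description precedes it below -/
import Mathlib

section
/- Let θ: [0,T) → ℝ solve the ODE θ'(t) = (e^{-θ(t)} − 1)·ω(t), where ω: [0,T) → ℝ is nonnegative, locally integrable, and satisfies ∫₀^T ω(τ) dτ = +∞. Then θ(t) → 0 as t → T. -/
/-!
With `u = exp θ - 1` the equation becomes linear, `u' = -ω u`. Hence `u²` is nonincreasing, so
once `u` vanishes it stays zero, and as long as `u ≠ 0` one can integrate `(log |u|)' = -ω`.
Either way `|u t| ≤ |u 0| · exp (-∫₀ᵗ ω)`, which tends to `0` because the integral diverges.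
-/

open Filter MeasureTheory intervalIntegral Set Topology

theorem hasDerivAt_exp_sub_one_of_hasDerivAt {θ : ℝ → ℝ} {w t : ℝ}
    (hθ : HasDerivAt θ ((Real.exp (-θ t) - 1) * w) t) :
    HasDerivAt (fun s => Real.exp (θ s) - 1) (-(Real.exp (θ t) - 1) * w) t := by
  refine (hθ.exp.sub_const 1).congr_deriv ?_
  rw [Real.exp_neg]
  field_simp
  ring

section LinearDecay

variable {u ω : ℝ → ℝ} {a b : ℝ}

theorem antitoneOn_sq_of_hasDerivAt_neg_mul (hu : ∀ s ∈ Icc a b, HasDerivAt u (-u s * ω s) s)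
    (hω : ∀ s ∈ Icc a b, 0 ≤ ω s) : AntitoneOn (fun s => u s ^ 2) (Icc a b) := by
  have hsq : ∀ s ∈ Icc a b, HasDerivAt (fun s => u s ^ 2) (2 * u s ^ 1 * (-u s * ω s)) s :=
    fun s hs => (hu s hs).pow 2
  refine antitoneOn_of_hasDerivWithinAt_nonpos (convex_Icc a b)
    (fun s hs => (hsq s hs).continuousAt.continuousWithinAt)
    (fun s hs => (hsq s (interior_subset hs)).hasDerivWithinAt) fun s hs => ?_
  have := hω s (interior_subset hs)
  nlinarith [sq_nonneg (u s)]

theorem abs_eq_mul_exp_neg_integral_of_hasDerivAt_neg_mul (hab : a ≤ b)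
    (hu : ∀ s ∈ Icc a b, HasDerivAt u (-u s * ω s) s) (hne : ∀ s ∈ Icc a b, u s ≠ 0)
    (hint : IntervalIntegrable ω volume a b) :
    |u b| = |u a| * Real.exp (-∫ s in a..b, ω s) := by
  have hlog : ∫ s in a..b, -ω s = Real.log (u b) - Real.log (u a) := by
    refine integral_eq_sub_of_hasDerivAt (f := fun s => Real.log (u s)) (fun s hs => ?_) hint.neg
    rw [uIcc_of_le hab] at hs
    have := (hu s hs).log (hne s hs)
    rwa [neg_mul, neg_div, mul_div_cancel_left₀ _ (hne s hs)] at this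
  rw [intervalIntegral.integral_neg, neg_eq_iff_eq_neg] at hlog
  rw [hlog, neg_neg, Real.exp_sub, Real.exp_log_eq_abs (hne b ⟨hab, le_rfl⟩),
    Real.exp_log_eq_abs (hne a ⟨le_rfl, hab⟩), mul_div_cancel₀]
  exact abs_ne_zero.mpr (hne a ⟨le_rfl, hab⟩)

theorem abs_le_mul_exp_neg_integral_of_hasDerivAt_neg_mul (hab : a ≤ b)
    (hu : ∀ s ∈ Icc a b, HasDerivAt u (-u s * ω s) s) (hω : ∀ s ∈ Icc a b, 0 ≤ ω s)
    (hint : IntervalIntegrable ω volume a b) :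
    |u b| ≤ |u a| * Real.exp (-∫ s in a..b, ω s) := by
  rcases eq_or_ne (u b) 0 with hb | hb
  · rw [hb, abs_zero]
    positivity
  have hne : ∀ s ∈ Icc a b, u s ≠ 0 := fun s hs hs0 => by
    have hsq : u b ^ 2 ≤ u s ^ 2 :=
      antitoneOn_sq_of_hasDerivAt_neg_mul hu hω hs ⟨hab, le_rfl⟩ hs.2
    rw [hs0, zero_pow two_ne_zero] at hsq
    exact hb (pow_eq_zero_iff two_ne_zero |>.mp (le_antisymm hsq (sq_nonneg _)))
  exact (abs_eq_mul_exp_neg_integral_of_hasDerivAt_neg_mul hab hu hne hint).le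

end LinearDecay

theorem eventually_nonneg_and_coe_lt (T : EReal) :
    ∀ᶠ t : ℝ in comap ((↑) : ℝ → EReal) (𝓝[<] T) ⊓ 𝓟 {t : ℝ | 0 ≤ t}, 0 ≤ t ∧ (t : EReal) < T :=
  Eventually.and (mem_inf_of_right (mem_principal_self _))
    (mem_inf_of_left (preimage_mem_comap self_mem_nhdsWithin))

theorem redistribution_ode_stabilization_general
    (T : EReal)
    (θ ω : ℝ → ℝ)
    (hω_nonneg : ∀ t : ℝ, 0 ≤ t → (t : EReal) < T → 0 ≤ ω t)
    (hω_loc : ∀ t : ℝ, 0 ≤ t → (t : EReal) < T → IntervalIntegrable ω volume 0 t)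
    (hθ : ∀ t : ℝ, 0 ≤ t → (t : EReal) < T →
      HasDerivAt θ ((Real.exp (-θ t) - 1) * ω t) t)
    (hdiv : Tendsto (fun t : ℝ => ∫ τ in (0:ℝ)..t, ω τ)
      ((Filter.comap (fun t : ℝ => (t : EReal)) (nhdsWithin T (Set.Iio T))) ⊓
        Filter.principal {t : ℝ | 0 ≤ t}) atTop) :
    Tendsto θ
      ((Filter.comap (fun t : ℝ => (t : EReal)) (nhdsWithin T (Set.Iio T))) ⊓
        Filter.principal {t : ℝ | 0 ≤ t}) (nhds 0) := by
  have hbound : ∀ᶠ t : ℝ in comap ((↑) : ℝ → EReal) (𝓝[<] T) ⊓ 𝓟 {t : ℝ | 0 ≤ t},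
      ‖Real.exp (θ t) - 1‖ ≤ |Real.exp (θ 0) - 1| * Real.exp (-∫ τ in (0:ℝ)..t, ω τ) := by
    filter_upwards [eventually_nonneg_and_coe_lt T] with t ⟨ht0, htT⟩
    have hlt : ∀ s ∈ Icc 0 t, (s : EReal) < T := fun s hs =>
      (EReal.coe_le_coe_iff.mpr hs.2).trans_lt htT
    exact abs_le_mul_exp_neg_integral_of_hasDerivAt_neg_mul ht0
      (fun s hs => hasDerivAt_exp_sub_one_of_hasDerivAt (hθ s hs.1 (hlt s hs)))
      (fun s hs => hω_nonneg s hs.1 (hlt s hs)) (hω_loc t ht0 htT)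
  have hdecay := (Real.tendsto_exp_atBot.comp (tendsto_neg_atTop_atBot.comp hdiv)).const_mul
    |Real.exp (θ 0) - 1|
  rw [mul_zero] at hdecay
  have hexp := (squeeze_zero_norm' hbound hdecay).add_const 1
  simp only [sub_add_cancel, zero_add] at hexp
  simpa only [Real.log_exp, Real.log_one] using hexp.log one_ne_zero

/-- Stabilization of the redistribution ODE θ' = (e^{-θ} - 1) ω(t) on [0,T),
with T ∈ (0,∞] possibly infinite, ω ≥ 0 locally integrable with divergent
integral: θ(t) → 0 as t → T⁻. -/
theorem redistribution_ode_stabilization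
    (T : EReal) (hT : 0 < T)
    (θ ω : ℝ → ℝ)
    (hω_nonneg : ∀ t : ℝ, 0 ≤ t → (t : EReal) < T → 0 ≤ ω t)
    (hω_loc : ∀ t : ℝ, 0 ≤ t → (t : EReal) < T → IntervalIntegrable ω volume 0 t)
    (hθ : ∀ t : ℝ, 0 ≤ t → (t : EReal) < T →
      HasDerivAt θ ((Real.exp (-θ t) - 1) * ω t) t)
    (hdiv : Tendsto (fun t : ℝ => ∫ τ in (0:ℝ)..t, ω τ)
      ((Filter.comap (fun t : ℝ => (t : EReal)) (nhdsWithin T (Set.Iio T))) ⊓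
        Filter.principal {t : ℝ | 0 ≤ t}) atTop) :
    Tendsto θ
      ((Filter.comap (fun t : ℝ => (t : EReal)) (nhdsWithin T (Set.Iio T))) ⊓
        Filter.principal {t : ℝ | 0 ≤ t}) (nhds 0) :=
  redistribution_ode_stabilization_general T θ ω hω_nonneg hω_loc hθ hdiv
end

section
/- Suppose g: S¹ × [0,T) → (0,∞) satisfies ∂_t g = −g·A(t) + (L(t) − g)·ω(t) with A, ω continuous, ω ≥ 0, ∫₀^T ω = +∞, L(t) = ∫₀¹ g(u,t) du, and g, L remain positive on [0,T). Then sup_{u ∈ S¹} |g(u,t)/L(t) − 1| → 0 as t → T. -/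
/-!
The difference `g(u,·) - g(v,·)` solves `y' = -(A + ω) y`, so
`g(u,t) - g(v,t) = (g(u,0) - g(v,0)) e^{-∫₀ᵗ (A + ω)}`. Averaging over `v` gives the same formula
for `g(u,t) - L(t)`; it shows that `L` is differentiable with `L' = -A L`, so
`L(t) = L(0) e^{-∫₀ᵗ A}`. Dividing, `g(u,t)/L(t) - 1 = (g(u,0)/L(0) - 1) e^{-∫₀ᵗ ω}`: the
prefactor is bounded on `[0, 1]` by continuity of `g(·,0)`, and the exponential tends to `0`.
-/

open Filter MeasureTheory intervalIntegral Set Real Topology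

theorem continuousOn_primitive_Icc {k : ℝ → ℝ} {a b : ℝ} (hk : ContinuousOn k (Icc a b)) :
    ContinuousOn (fun y => ∫ τ in a..y, k τ) (Icc a b) := by
  rcases le_or_gt a b with hab | hba
  · rw [← uIcc_of_le hab] at hk ⊢
    exact continuousOn_primitive_interval hk.integrableOn_Icc
  · simp [Icc_eq_empty_of_lt hba]

theorem hasDerivWithinAt_Ici_primitive {k : ℝ → ℝ} {a b x : ℝ}
    (hk : ContinuousOn k (Icc a b)) (hx : x ∈ Ico a b) :
    HasDerivWithinAt (fun y => ∫ τ in a..y, k τ) (k x) (Ici x) x := by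
  have hmem : Icc a b ∈ 𝓝[>] x := Icc_mem_nhdsGT_of_mem hx
  refine integral_hasDerivWithinAt_right (t := Ioi x) ?_ ?_
    ((hk x (Ico_subset_Icc_self hx)).mono_of_mem_nhdsWithin hmem)
  · exact (hk.mono (Icc_subset_Icc_right hx.2.le)).intervalIntegrable_of_Icc hx.1
  · exact (hk.stronglyMeasurableAtFilter_nhdsWithin measurableSet_Icc x).filter_mono
      (nhdsWithin_le_of_mem hmem)

theorem eq_mul_exp_neg_integral_of_hasDerivWithinAt {f k : ℝ → ℝ} {a b : ℝ} (hab : a ≤ b)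
    (hf : ContinuousOn f (Icc a b)) (hk : ContinuousOn k (Icc a b))
    (hf' : ∀ x ∈ Ico a b, HasDerivWithinAt f (-(k x * f x)) (Ici x) x) :
    f b = f a * exp (-∫ x in a..b, k x) := by
  have hconst := constant_of_has_deriv_right_zero
    (f := fun y => f y * exp (∫ τ in a..y, k τ))
    (hf.mul (continuous_exp.comp_continuousOn (continuousOn_primitive_Icc hk)))
    (fun x hx => ((hf' x hx).mul (hasDerivWithinAt_Ici_primitive hk hx).exp).congr_deriv
      (by ring)) b ⟨hab, le_rfl⟩
  simp only [integral_same, exp_zero, mul_one] at hconst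
  rw [exp_neg, ← hconst]
  field_simp

namespace Redistribution

variable {T : ℝ} {g : ℝ → ℝ → ℝ} {L A ω : ℝ → ℝ}

theorem sub_eq_mul_exp_neg_integral (hA : ContinuousOn A (Ico 0 T))
    (hω : ContinuousOn ω (Ico 0 T))
    (hg : ∀ (u : ℝ), ∀ t ∈ Ico (0:ℝ) T,
      HasDerivAt (fun t => g u t) (-(g u t) * A t + (L t - g u t) * ω t) t)
    (u v : ℝ) {t : ℝ} (ht : t ∈ Ico 0 T) :
    g u t - g v t = (g u 0 - g v 0) * exp (-∫ τ in 0..t, (A τ + ω τ)) := by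
  have hsub : Icc 0 t ⊆ Ico 0 T := Icc_subset_Ico_right ht.2
  refine eq_mul_exp_neg_integral_of_hasDerivWithinAt (f := fun s => g u s - g v s) ht.1
    (fun s hs => ((hg u s (hsub hs)).sub (hg v s (hsub hs))).continuousAt.continuousWithinAt)
    ((hA.add hω).mono hsub) (fun s hs => ?_)
  exact ((hg u s (hsub (Ico_subset_Icc_self hs))).sub
    (hg v s (hsub (Ico_subset_Icc_self hs)))).hasDerivWithinAt.congr_deriv (by ring)

theorem sub_integral_eq_mul_exp_neg_integral (hA : ContinuousOn A (Ico 0 T))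
    (hω : ContinuousOn ω (Ico 0 T))
    (hg : ∀ (u : ℝ), ∀ t ∈ Ico (0:ℝ) T,
      HasDerivAt (fun t => g u t) (-(g u t) * A t + (L t - g u t) * ω t) t)
    (hg0 : Continuous fun u => g u 0) (u : ℝ) {t : ℝ} (ht : t ∈ Ico 0 T) :
    g u t - ∫ v in (0:ℝ)..1, g v t =
      (g u 0 - ∫ v in (0:ℝ)..1, g v 0) * exp (-∫ τ in 0..t, (A τ + ω τ)) := by
  set E := exp (-∫ τ in 0..t, (A τ + ω τ))
  have hcongr : EqOn (fun v => g v t) (fun v => (g u t - g u 0 * E) + g v 0 * E) (uIcc 0 1) :=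
    fun v _ => by linear_combination -(sub_eq_mul_exp_neg_integral hA hω hg u v ht)
  rw [integral_congr hcongr, integral_add intervalIntegrable_const
    ((hg0.intervalIntegrable 0 1).mul_const E), intervalIntegral.integral_const,
    intervalIntegral.integral_mul_const]
  simp only [sub_zero, one_smul]
  ring

theorem mean_eq_mul_exp_neg_integral (hA : ContinuousOn A (Ico 0 T))
    (hω : ContinuousOn ω (Ico 0 T))
    (hg : ∀ (u : ℝ), ∀ t ∈ Ico (0:ℝ) T,
      HasDerivAt (fun t => g u t) (-(g u t) * A t + (L t - g u t) * ω t) t)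
    (hg0 : Continuous fun u => g u 0)
    (hL : ∀ t ∈ Ico (0:ℝ) T, L t = ∫ u in (0:ℝ)..1, g u t) {t : ℝ} (ht : t ∈ Ico 0 T) :
    L t = L 0 * exp (-∫ τ in 0..t, A τ) := by
  have hT0 : (0:ℝ) ∈ Ico 0 T := ⟨le_rfl, ht.1.trans_lt ht.2⟩
  have hsub : Icc 0 t ⊆ Ico 0 T := Icc_subset_Ico_right ht.2
  have hAω : ContinuousOn (fun τ => A τ + ω τ) (Icc 0 t) := (hA.add hω).mono hsub
  set Φ := fun s => ∫ τ in 0..s, (A τ + ω τ)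
  have hdev : ∀ s ∈ Ico 0 T, g 0 s - L s = (g 0 0 - L 0) * exp (-Φ s) := fun s hs => by
    rw [hL s hs, hL 0 hT0]
    exact sub_integral_eq_mul_exp_neg_integral hA hω hg hg0 0 hs
  -- No differentiation under the integral: `L` agrees with this explicit function.
  set M := fun s => g 0 s - (g 0 0 - L 0) * exp (-Φ s)
  have hLM : ∀ s ∈ Ico 0 T, L s = M s := fun s hs => by
    simp only [M]; linear_combination -hdev s hs
  have hM := eq_mul_exp_neg_integral_of_hasDerivWithinAt (f := M) (k := A) ht.1
    ((show ContinuousOn (fun s => g 0 s) (Icc 0 t) from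
      fun s hs => (hg 0 s (hsub hs)).continuousAt.continuousWithinAt).sub
      (continuousOn_const.mul (continuousOn_primitive_Icc hAω).neg.rexp))
    (hA.mono hsub) (fun x hx => ?_)
  · rwa [hLM t ht, hLM 0 hT0]
  have hxT : x ∈ Ico 0 T := hsub (Ico_subset_Icc_self hx)
  have hE : HasDerivWithinAt (fun s => exp (-Φ s)) (exp (-Φ x) * -(A x + ω x)) (Ici x) x :=
    (hasDerivWithinAt_Ici_primitive hAω hx).neg.exp
  refine ((hg 0 x hxT).hasDerivWithinAt.sub (hE.const_mul _)).congr_deriv ?_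
  linear_combination -ω x * hdev x hxT

theorem div_sub_one_eq_mul_exp_neg_integral (hA : ContinuousOn A (Ico 0 T))
    (hω : ContinuousOn ω (Ico 0 T))
    (hg : ∀ (u : ℝ), ∀ t ∈ Ico (0:ℝ) T,
      HasDerivAt (fun t => g u t) (-(g u t) * A t + (L t - g u t) * ω t) t)
    (hg0 : Continuous fun u => g u 0)
    (hL : ∀ t ∈ Ico (0:ℝ) T, L t = ∫ u in (0:ℝ)..1, g u t) (hL0 : L 0 ≠ 0)
    (u : ℝ) {t : ℝ} (ht : t ∈ Ico 0 T) :
    g u t / L t - 1 = (g u 0 / L 0 - 1) * exp (-∫ τ in 0..t, ω τ) := by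
  have hT0 : (0:ℝ) ∈ Ico 0 T := ⟨le_rfl, ht.1.trans_lt ht.2⟩
  have hsub : Icc 0 t ⊆ Ico 0 T := Icc_subset_Ico_right ht.2
  have hsplit : ∫ τ in 0..t, (A τ + ω τ) = (∫ τ in 0..t, A τ) + ∫ τ in 0..t, ω τ :=
    integral_add ((hA.mono hsub).intervalIntegrable_of_Icc ht.1)
      ((hω.mono hsub).intervalIntegrable_of_Icc ht.1)
  have hdev := sub_integral_eq_mul_exp_neg_integral hA hω hg hg0 u ht
  rw [← hL t ht, ← hL 0 hT0, hsplit, neg_add, exp_add] at hdev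
  have hLt := mean_eq_mul_exp_neg_integral hA hω hg hg0 hL ht
  rw [div_sub_one (hLt ▸ mul_ne_zero hL0 (exp_ne_zero _)), hdev, hLt]
  field_simp

end Redistribution

theorem uniform_redistribution_limit_general
    (T : ℝ) (hT : 0 < T)
    (g : ℝ → ℝ → ℝ) (L A ω : ℝ → ℝ)
    (hL : ∀ t ∈ Set.Ico (0:ℝ) T, L t = ∫ u in (0:ℝ)..1, g u t)
    (hA : ContinuousOn A (Set.Ico 0 T))
    (hω : ContinuousOn ω (Set.Ico 0 T))
    (hdiv : Tendsto (fun t : ℝ => ∫ τ in (0:ℝ)..t, ω τ)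
      (nhdsWithin T (Set.Iio T)) atTop)
    (hLpos : ∀ t ∈ Set.Ico (0:ℝ) T, 0 < L t)
    (hg0cont : Continuous fun u => g u 0)
    (hg : ∀ (u : ℝ), ∀ t ∈ Set.Ico (0:ℝ) T,
      HasDerivAt (fun t => g u t) (-(g u t) * A t + (L t - g u t) * ω t) t) :
    Tendsto (fun t : ℝ => ⨆ u : Set.Icc (0:ℝ) 1, |g u t / L t - 1|)
      (nhdsWithin T (Set.Iio T)) (nhds 0) := by
  have hL0 : L 0 ≠ 0 := (hLpos 0 ⟨le_rfl, hT⟩).ne'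
  obtain ⟨C, hC⟩ := isCompact_Icc.exists_bound_of_continuousOn (s := Icc (0:ℝ) 1)
    ((hg0cont.div_const (L 0)).sub continuous_const).continuousOn
  have hbound : ∀ᶠ t in 𝓝[<] T,
      (⨆ u : Icc (0:ℝ) 1, |g u t / L t - 1|) ≤ C * exp (-∫ τ in 0..t, ω τ) := by
    filter_upwards [Ioo_mem_nhdsLT_of_mem ⟨hT, le_rfl⟩] with t ht
    refine ciSup_le fun u => ?_
    rw [Redistribution.div_sub_one_eq_mul_exp_neg_integral hA hω hg hg0cont hL hL0 u ⟨ht.1.le, ht.2⟩, abs_mul,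
      abs_exp]
    gcongr
    exact hC u u.2
  have hlim : Tendsto (fun t => C * exp (-∫ τ in 0..t, ω τ)) (𝓝[<] T) (𝓝 0) := by
    simpa using (tendsto_exp_atBot.comp (tendsto_neg_atBot_iff.mpr hdiv)).const_mul C
  exact squeeze_zero' (.of_forall fun t => iSup_nonneg fun u => abs_nonneg _) hbound hlim

/-- Uniform asymptotic redistribution: if ∂ₜg = -g A(t) + (L - g)ω(t) with
L(t) = ∫₀¹ g du, ω ≥ 0, ∫₀^T ω = +∞, g and L positive, and g(·,0) continuous
and 1-periodic, then sup_u |g(u,t)/L(t) - 1| → 0 as t → T⁻. -/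
theorem uniform_redistribution_limit
    (T : ℝ) (hT : 0 < T)
    (g : ℝ → ℝ → ℝ) (L A ω : ℝ → ℝ)
    (hL : ∀ t ∈ Set.Ico (0:ℝ) T, L t = ∫ u in (0:ℝ)..1, g u t)
    (hA : ContinuousOn A (Set.Ico 0 T))
    (hω : ContinuousOn ω (Set.Ico 0 T))
    (hω_nonneg : ∀ t ∈ Set.Ico (0:ℝ) T, 0 ≤ ω t)
    (hdiv : Tendsto (fun t : ℝ => ∫ τ in (0:ℝ)..t, ω τ)
      (nhdsWithin T (Set.Iio T)) atTop)
    (hgpos : ∀ (u : ℝ), ∀ t ∈ Set.Ico (0:ℝ) T, 0 < g u t)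
    (hLpos : ∀ t ∈ Set.Ico (0:ℝ) T, 0 < L t)
    (hg0cont : Continuous fun u => g u 0)
    (hgper : ∀ (u : ℝ), ∀ t ∈ Set.Ico (0:ℝ) T, g (u + 1) t = g u t)
    (hg : ∀ (u : ℝ), ∀ t ∈ Set.Ico (0:ℝ) T,
      HasDerivAt (fun t => g u t) (-(g u t) * A t + (L t - g u t) * ω t) t) :
    Tendsto (fun t : ℝ => ⨆ u : Set.Icc (0:ℝ) 1, |g u t / L t - 1|)
      (nhdsWithin T (Set.Iio T)) (nhds 0) :=
  uniform_redistribution_limit_general T hT g L A ω hL hA hω hdiv hLpos hg0cont hg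
end
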